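/- Let d ≥ 4 be an integer and let f = x^{d-1}z + y^d + x^{d-2}yw + x⁴y^{d-4} ∈ ℂ[x,y,z,w]. For every (α, β, γ, δ) ∈ ℂ⁴ with γ ≠ 0, the solutions (x,y,z,w) ∈ ℂ⁴ of ∂f/∂x = α, ∂f/∂y = β, ∂f/∂z = γ, ∂f/∂w = δ form a nonempty set all of whose elements are pairwise proportional. -/

import Mathlib

/-!
The gradient equations are triangular: `∂f/∂z = x^(d-1)` fixes `x` up to a `(d-1)`-th root of
unity, after which `∂f/∂w`, `∂f/∂y` and `∂f/∂x` are linear in `y`, `w` and `z` respectively, with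
leading coefficients `x^(d-2)`, `x^(d-2)` and `(d-1) x^(d-2)`, all nonzero. So the fibre is nonempty
and a solution is determined by its `x`-coordinate. As `f` is homogeneous of degree `d`, scaling a
solution by a `(d-1)`-th root of unity `c` gives another solution; taking for `c` the ratio of the
`x`-coordinates of two solutions shows that they are proportional.
-/
open MvPolynomial

namespace MvPolynomial

variable {R σ : Type*} [CommSemiring R]

theorem IsHomogeneous.eval_smul {φ : MvPolynomial σ R} {n : ℕ} (hφ : φ.IsHomogeneous n)
    (c : R) (x : σ → R) : eval (c • x) φ = c ^ n * eval x φ := by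
  rw [eval_eq, eval_eq, Finset.mul_sum]
  refine Finset.sum_congr rfl fun s hs => ?_
  have hdeg : ∑ i ∈ s.support, s i = n := by
    simpa [Finsupp.weight_apply, Finsupp.sum] using hφ (mem_support_iff.mp hs)
  simp only [Pi.smul_apply, smul_eq_mul, mul_pow, Finset.prod_mul_distrib,
    Finset.prod_pow_eq_pow_sum, hdeg]
  ring

noncomputable def evalGradient (φ : MvPolynomial σ R) (x : σ → R) : σ → R :=
  fun i => eval x (pderiv i φ)

theorem IsHomogeneous.evalGradient_smul {φ : MvPolynomial σ R} {n : ℕ}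
    (hφ : φ.IsHomogeneous n) (c : R) (x : σ → R) :
    evalGradient φ (c • x) = c ^ (n - 1) • evalGradient φ x := by
  funext i
  exact hφ.pderiv.eval_smul c x

end MvPolynomial

section Surface

variable (R : Type*) [CommSemiring R]

/-- `f` with `d = e + 4`, so that no exponent involves truncated subtraction. -/
noncomputable def surfacePoly (e : ℕ) : MvPolynomial (Fin 4) R :=
  X 0 ^ (e + 3) * X 2 + X 1 ^ (e + 4) + X 0 ^ (e + 2) * X 1 * X 3 + X 0 ^ 4 * X 1 ^ e

theorem isHomogeneous_surfacePoly (e : ℕ) : (surfacePoly R e).IsHomogeneous (e + 4) := by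
  have h := isHomogeneous_X_pow (R := R) (σ := Fin 4)
  refine (((((h 0 (e + 3)).mul (isHomogeneous_X R 2)).add (h 1 (e + 4))).add ?_).add ?_)
  · convert ((h 0 (e + 2)).mul (isHomogeneous_X R 1)).mul (isHomogeneous_X R 3) using 1
  · convert (h 0 4).mul (h 1 e) using 1; omega

variable {R} (e : ℕ) (p : Fin 4 → R)

theorem evalGradient_surfacePoly_zero :
    evalGradient (surfacePoly R e) p 0 = (e + 3) * p 0 ^ (e + 2) * p 2
      + (e + 2) * p 0 ^ (e + 1) * p 1 * p 3 + 4 * p 0 ^ 3 * p 1 ^ e := by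
  simp only [evalGradient, surfacePoly, map_add, map_mul, map_pow, map_natCast, map_zero, map_one,
    Derivation.leibniz, Derivation.leibniz_pow, pderiv_X, Pi.single_apply, Fin.reduceEq, if_true,
    if_false, eval_X, eval_ofNat, smul_eq_mul, nsmul_eq_mul, Nat.add_one_sub_one, Nat.cast_add,
    Nat.cast_ofNat]
  ring

theorem evalGradient_surfacePoly_one :
    evalGradient (surfacePoly R e) p 1 =
      (e + 4) * p 1 ^ (e + 3) + p 0 ^ (e + 2) * p 3 + e * p 0 ^ 4 * p 1 ^ (e - 1) := by
  simp only [evalGradient, surfacePoly, map_add, map_mul, map_pow, map_natCast, map_zero, map_one,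
    Derivation.leibniz, Derivation.leibniz_pow, pderiv_X, Pi.single_apply, Fin.reduceEq, if_true,
    if_false, eval_X, eval_ofNat, smul_eq_mul, nsmul_eq_mul, Nat.add_one_sub_one, Nat.cast_add,
    Nat.cast_ofNat]
  ring

theorem evalGradient_surfacePoly_two :
    evalGradient (surfacePoly R e) p 2 = p 0 ^ (e + 3) := by
  simp [evalGradient, surfacePoly]

theorem evalGradient_surfacePoly_three :
    evalGradient (surfacePoly R e) p 3 = p 0 ^ (e + 2) * p 1 := by
  simp [evalGradient, surfacePoly]

end Surface

section Fibers

variable {K : Type*} [Field K] (e : ℕ)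

theorem eq_of_evalGradient_surfacePoly_eq [CharZero K] {p q : Fin 4 → K}
    (h : evalGradient (surfacePoly K e) p = evalGradient (surfacePoly K e) q)
    (h0 : p 0 = q 0) (hp0 : p 0 ≠ 0) : p = q := by
  have hpow : p 0 ^ (e + 2) ≠ 0 := pow_ne_zero _ hp0
  have g0 := congrFun h 0
  have g1 := congrFun h 1
  have g3 := congrFun h 3
  simp only [evalGradient_surfacePoly_zero, evalGradient_surfacePoly_one,
    evalGradient_surfacePoly_three, ← h0] at g0 g1 g3
  have h1 : p 1 = q 1 := mul_left_cancel₀ hpow g3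
  rw [← h1] at g0 g1
  have h3 : p 3 = q 3 := mul_left_cancel₀ hpow (by linear_combination g1)
  rw [← h3] at g0
  have h2 : p 2 = q 2 := by
    refine mul_left_cancel₀ (mul_ne_zero (by norm_cast) hpow : (e + 3 : K) * p 0 ^ (e + 2) ≠ 0) ?_
    linear_combination g0
  ext i
  fin_cases i <;> assumption

theorem exists_evalGradient_surfacePoly_eq [IsAlgClosed K] [CharZero K] (v : Fin 4 → K)
    (hv : v 2 ≠ 0) : ∃ p, evalGradient (surfacePoly K e) p = v := by
  obtain ⟨x, hx⟩ := IsAlgClosed.exists_pow_nat_eq (v 2) (n := e + 3) (by omega)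
  have hx0 : x ≠ 0 := ne_zero_pow (by omega) (hx ▸ hv)
  have he : (e + 3 : K) ≠ 0 := by norm_cast
  set y := v 3 / x ^ (e + 2)
  set w := (v 1 - (e + 4) * y ^ (e + 3) - e * x ^ 4 * y ^ (e - 1)) / x ^ (e + 2)
  set z := (v 0 - (e + 2) * x ^ (e + 1) * y * w - 4 * x ^ 3 * y ^ e) / ((e + 3) * x ^ (e + 2))
  refine ⟨![x, y, z, w], funext fun i => ?_⟩
  fin_cases i
  · simp only [Fin.zero_eta, evalGradient_surfacePoly_zero, Matrix.cons_val, z]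
    field_simp
    ring
  · simp only [Fin.mk_one, evalGradient_surfacePoly_one, Matrix.cons_val, w]
    field_simp
    ring
  · simpa [evalGradient_surfacePoly_two] using hx
  · simp only [Fin.reduceFinMk, evalGradient_surfacePoly_three, Matrix.cons_val, y]
    field_simp

theorem exists_smul_eq_of_evalGradient_surfacePoly_eq [CharZero K] {p q : Fin 4 → K}
    (h : evalGradient (surfacePoly K e) p = evalGradient (surfacePoly K e) q)
    (hq : evalGradient (surfacePoly K e) q 2 ≠ 0) : ∃ c : K, c ≠ 0 ∧ q = c • p := by
  have h2 := congrFun h 2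
  simp only [evalGradient_surfacePoly_two] at hq h2
  have hp0 : p 0 ≠ 0 := ne_zero_pow (by omega) (h2 ▸ hq)
  have hq0 : q 0 ≠ 0 := ne_zero_pow (by omega) hq
  set c := q 0 / p 0
  have hc : c ^ (e + 3) = 1 := by rw [div_pow, ← h2, div_self (pow_ne_zero _ hp0)]
  have hcp : (c • p) 0 = q 0 := div_mul_cancel₀ _ hp0
  refine ⟨c, div_ne_zero hq0 hp0, (eq_of_evalGradient_surfacePoly_eq e ?_ hcp (hcp ▸ hq0)).symm⟩
  rw [(isHomogeneous_surfacePoly K e).evalGradient_smul, show e + 4 - 1 = e + 3 from rfl, hc,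
    one_smul, h]

end Fibers

/-- The surface `D_d : x^{d-1}z + y^d + x^{d-2}yw + x⁴y^{d-4} = 0` is homaloidal. -/
theorem stmt1 (d : ℕ) (hd : 4 ≤ d)
    (f : MvPolynomial (Fin 4) ℂ)
    (hf : f = X 0 ^ (d - 1) * X 2 + X 1 ^ d + X 0 ^ (d - 2) * X 1 * X 3 +
        X 0 ^ 4 * X 1 ^ (d - 4))
    (α β γ δ : ℂ) (hγ : γ ≠ 0)
    (Sol : Set (Fin 4 → ℂ))
    (hSol : Sol = {p | eval p (pderiv 0 f) = α ∧ eval p (pderiv 1 f) = β ∧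
        eval p (pderiv 2 f) = γ ∧ eval p (pderiv 3 f) = δ}) :
    Sol.Nonempty ∧ ∀ p ∈ Sol, ∀ q ∈ Sol, ∃ c : ℂ, c ≠ 0 ∧ q = c • p := by
  obtain ⟨e, rfl⟩ : ∃ e, d = e + 4 := ⟨d - 4, by omega⟩
  have hf' : f = surfacePoly ℂ e := hf
  have hSol' : Sol = {p | evalGradient (surfacePoly ℂ e) p = ![α, β, γ, δ]} := by
    ext p
    simp [hSol, hf', funext_iff, Fin.forall_fin_succ, evalGradient]
  subst hSol'
  refine ⟨exists_evalGradient_surfacePoly_eq e _ hγ, fun p hp q hq => ?_⟩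
  exact exists_smul_eq_of_evalGradient_surfacePoly_eq e (hp.trans hq.symm) (by rw [hq]; exact hγ)
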